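/- Let φ : G → G be an automorphism of a countable discrete twisted conjugacy separable group G such that all Reidemeister numbers R(φⁿ), n ≥ 1, are finite. Then for every n ≥ 1 one has the congruence ∑_{d | n} μ(d) · R(φ^{n/d}) ≡ 0 (mod n), where μ is the Möbius function. -/

import Mathlib

/-- `x` and `y` are `φ`-conjugate (twisted conjugate): `y = g * x * φ(g)⁻¹` for some `g`. -/
def TwistedConj {G : Type*} [Group G] (φ : MulAut G) (x y : G) : Prop :=
  ∃ g : G, y = g * x * (φ g)⁻¹

/-- Twisted conjugacy is an equivalence relation; its classes are the
`φ`-conjugacy (Reidemeister) classes. -/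
def twSetoid (G : Type*) [Group G] (φ : MulAut G) : Setoid G where
  r := TwistedConj φ
  iseqv := by
    refine ⟨fun x => ⟨1, by simp⟩, ?_, ?_⟩
    · rintro x y ⟨g, rfl⟩
      exact ⟨g⁻¹, by simp [mul_assoc]⟩
    · rintro x y z ⟨g, rfl⟩ ⟨h, rfl⟩
      exact ⟨h * g, by simp [mul_assoc]⟩

/-- The Reidemeister number of `φ`: the number of `φ`-conjugacy classes. -/
noncomputable def ReidemeisterNumber (G : Type*) [Group G] (φ : MulAut G) : ℕ :=
  Nat.card (Quotient (twSetoid G φ))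

/-- A finite quotient respecting `φ` that separates the elements `x` and `y`. -/
inductive SepWitness {G : Type*} [Group G] (φ : MulAut G) (x y : G) : Prop where
  | intro (K : Type) [grp : Group K] [fin : Finite K] (φK : MulAut K) (F : G →* K)
      (surj : Function.Surjective F) (comm : ∀ g : G, F (φ g) = φK (F g))
      (sep : ¬ TwistedConj φK (F x) (F y)) : SepWitness φ x y

/-- `G` is `φ`-conjugacy separable. -/
def PhiConjSep {G : Type*} [Group G] (φ : MulAut G) : Prop :=
  ∀ x y : G, ¬ TwistedConj φ x y → SepWitness φ x y

/-- `G` is twisted conjugacy separable: `φ`-conjugacy separable for every automorphism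
`φ` with `R(φ) < ∞`. -/
def TwistedConjSep (G : Type*) [Group G] : Prop :=
  ∀ φ : MulAut G, Finite (Quotient (twSetoid G φ)) → PhiConjSep φ

/-!
Separating the finitely many `φ^m`-twisted classes for all `m ∣ n` at once yields a finite-index
normal subgroup `N` that may be taken `φ`-invariant (intersect its preimages under `φ^j`,
`j < n`). Then `K = G ⧸ N` with the induced automorphism `ψ` satisfies `R(φ^m) = R(ψ^m)` for
`m ∣ n`. In a finite group, Burnside's lemma for the twisted action `g • x = g x ψ(g)⁻¹` gives
`R(ψ) = #{conjugacy classes C with ψ(C) = C}`: the `g` fixing some `x` are those conjugate to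
`ψ(g)`, and each class fixed by `ψ` contributes `|C| · |K| / |C| = |K|`. So `R(φ^m)` counts the
fixed points of `σ^m`, where `σ` is the permutation of conjugacy classes of `K` induced by `ψ`,
and by Möbius inversion `∑_{d ∣ n} μ(d) R(φ^{n/d})` counts the points of least period `n`
of `σ`, which fall into `σ`-orbits of length `n`.
-/

open Function MulAction

namespace Equiv.Perm

variable {X : Type*}

theorem dvd_card_of_forall_minimalPeriod_eq [Finite X] (τ : Perm X) {n : ℕ}
    (h : ∀ x, minimalPeriod τ x = n) : n ∣ Nat.card X := by
  classical
  have := Fintype.ofFinite X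
  rw [Nat.card_congr (selfEquivSigmaOrbits (Subgroup.zpowers τ) X), Nat.card_sigma]
  refine Finset.dvd_sum fun ω _ => ?_
  have hperiod : minimalPeriod τ ω.out = _ := minimalPeriod_eq_card τ ω.out
  rw [h, Fintype.card_eq_nat_card] at hperiod
  rw [hperiod]

theorem minimalPeriod_subtypePerm {p : X → Prop} (σ : Perm X) (h : ∀ x, p (σ x) ↔ p x)
    (x : {x // p x}) : minimalPeriod (σ.subtypePerm h) x = minimalPeriod σ x :=
  minimalPeriod_eq_minimalPeriod_iff.mpr fun k => by
    simp only [IsPeriodicPt, IsFixedPt, iterate_eq_pow, subtypePerm_pow, subtypePerm_apply,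
      Subtype.ext_iff]

theorem dvd_card_minimalPeriod_eq [Finite X] (σ : Perm X) (n : ℕ) :
    n ∣ Nat.card {x // minimalPeriod σ x = n} := by
  have hinv : ∀ x, minimalPeriod σ (σ x) = n ↔ minimalPeriod σ x = n := fun x => by
    rw [minimalPeriod_apply (σ.injective.mem_periodicPts x)]
  exact dvd_card_of_forall_minimalPeriod_eq (σ.subtypePerm hinv) fun x =>
    (minimalPeriod_subtypePerm σ hinv x).trans x.2

theorem card_fixedPoints_pow_eq_sum [Finite X] (σ : Perm X) {k : ℕ} (hk : k ≠ 0) :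
    Nat.card {x // (σ ^ k) x = x} = ∑ e ∈ k.divisors, Nat.card {x // minimalPeriod σ x = e} := by
  classical
  have := Fintype.ofFinite X
  have hfix : ∀ x, (σ ^ k) x = x ↔ minimalPeriod σ x ∈ k.divisors := fun x => by
    rw [Nat.mem_divisors, ← isPeriodicPt_iff_minimalPeriod_dvd, IsPeriodicPt, IsFixedPt,
      iterate_eq_pow, and_iff_left hk]
  simp only [Nat.card_eq_fintype_card, Fintype.card_subtype]
  rw [Finset.card_eq_sum_card_fiberwise (f := minimalPeriod σ) (t := k.divisors)
    fun x hx => (hfix x).mp (Finset.mem_filter.mp hx).2]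
  refine Finset.sum_congr rfl fun e he => congrArg Finset.card ?_
  ext x
  simp only [Finset.mem_filter, Finset.mem_univ, true_and, hfix, and_iff_right_iff_imp]
  rintro rfl
  exact he

theorem sum_moebius_mul_card_fixedPoints_pow [Finite X] (σ : Perm X) {n : ℕ} (hn : 0 < n) :
    ∑ d ∈ n.divisors, ArithmeticFunction.moebius d * (Nat.card {x // (σ ^ (n / d)) x = x} : ℤ) =
      Nat.card {x // minimalPeriod σ x = n} := by
  have hinversion := (ArithmeticFunction.sum_eq_iff_sum_smul_moebius_eq
    (f := fun e => (Nat.card {x // minimalPeriod σ x = e} : ℤ))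
    (g := fun k => (Nat.card {x // (σ ^ k) x = x} : ℤ))).mp
    (fun k hk => by simp only [card_fixedPoints_pow_eq_sum σ hk.ne', Nat.cast_sum]) n hn
  rwa [Nat.sum_divisorsAntidiagonal fun a b =>
    ArithmeticFunction.moebius a • (Nat.card {x // (σ ^ b) x = x} : ℤ)] at hinversion

theorem dvd_sum_moebius_mul_card_fixedPoints_pow [Finite X] (σ : Perm X) {n : ℕ} (hn : 0 < n) :
    (n : ℤ) ∣ ∑ d ∈ n.divisors,
      ArithmeticFunction.moebius d * (Nat.card {x // (σ ^ (n / d)) x = x} : ℤ) := by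
  rw [sum_moebius_mul_card_fixedPoints_pow σ hn]
  exact Int.natCast_dvd_natCast.mpr (dvd_card_minimalPeriod_eq σ n)

end Equiv.Perm

section TwistedBurnside

variable {K : Type*} [Group K]

instance : MulAction (MulAut K) (ConjClasses K) where
  smul ψ := ConjClasses.map ψ.toMonoidHom
  one_smul C := by
    obtain ⟨a, rfl⟩ := ConjClasses.mk_surjective C
    rfl
  mul_smul ψ χ C := by
    obtain ⟨a, rfl⟩ := ConjClasses.mk_surjective C
    rfl

theorem ConjClasses.mulAut_smul_mk (ψ : MulAut K) (a : K) :
    ψ • ConjClasses.mk a = ConjClasses.mk (ψ a) :=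
  rfl

def TwistedConjAct (_ : MulAut K) : Type _ := K

namespace TwistedConjAct

variable (ψ : MulAut K)

def ofGroup : K ≃ TwistedConjAct ψ := Equiv.refl K

instance : MulAction K (TwistedConjAct ψ) where
  smul g x := ofGroup ψ (g * (ofGroup ψ).symm x * (ψ g)⁻¹)
  one_smul x := by
    change ofGroup ψ (1 * _ * (ψ 1)⁻¹) = x
    simp
  mul_smul g h x := by
    change ofGroup ψ (g * h * _ * (ψ (g * h))⁻¹) = ofGroup ψ (g * (h * _ * (ψ h)⁻¹) * (ψ g)⁻¹)
    simp [mul_assoc]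

theorem smul_ofGroup (g x : K) : g • ofGroup ψ x = ofGroup ψ (g * x * (ψ g)⁻¹) := rfl

theorem card_orbits_eq_reidemeisterNumber :
    Nat.card (orbitRel.Quotient K (TwistedConjAct ψ)) = ReidemeisterNumber K ψ := by
  refine Nat.card_congr (Quotient.congr (ofGroup ψ).symm fun x y => ?_)
  obtain ⟨x, rfl⟩ := (ofGroup ψ).surjective x
  obtain ⟨y, rfl⟩ := (ofGroup ψ).surjective y
  simp only [orbitRel_apply, mem_orbit_iff, smul_ofGroup, Equiv.symm_apply_apply,
    EmbeddingLike.apply_eq_iff_eq]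
  exact ⟨fun ⟨g, hg⟩ => ⟨g⁻¹, by simp [← hg, mul_assoc]⟩,
    fun ⟨g, hg⟩ => ⟨g⁻¹, by simp [hg, mul_assoc]⟩⟩

theorem ofGroup_mem_fixedBy_iff (a x : K) :
    ofGroup ψ x ∈ fixedBy (TwistedConjAct ψ) a ↔ a * x = x * ψ a := by
  rw [mem_fixedBy, smul_ofGroup, EmbeddingLike.apply_eq_iff_eq, mul_inv_eq_iff_eq_mul]

def fixedByEquivStabilizer {a x₀ : K} (h₀ : a * x₀ = x₀ * ψ a) :
    fixedBy (TwistedConjAct ψ) a ≃ stabilizer (ConjAct K) a :=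
  ((ofGroup ψ).symm.trans ((Equiv.mulRight x₀⁻¹).trans ConjAct.toConjAct.toEquiv)).subtypeEquiv
    fun x => by
      obtain ⟨y, rfl⟩ := (ofGroup ψ).surjective x
      have hψ : ψ a = x₀⁻¹ * a * x₀ := by rw [mul_assoc, h₀, inv_mul_cancel_left]
      rw [ofGroup_mem_fixedBy_iff, hψ, mem_stabilizer_iff, ConjAct.smul_def]
      simp only [Equiv.trans_apply, Equiv.symm_apply_apply, Equiv.coe_mulRight,
        MulEquiv.toEquiv_eq_coe, MulEquiv.coe_toEquiv, ConjAct.ofConjAct_toConjAct, mul_inv_rev,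
        inv_inv]
      rw [show y * x₀⁻¹ * a * (x₀ * y⁻¹) = y * (x₀⁻¹ * a) * x₀ * y⁻¹ by group,
        mul_inv_eq_iff_eq_mul, eq_comm]
      simp only [mul_assoc]

variable {ψ}

theorem card_fixedBy_mul_card_carrier {a : K} (h : ψ • ConjClasses.mk a = ConjClasses.mk a) :
    Nat.card (fixedBy (TwistedConjAct ψ) a) * Nat.card (ConjClasses.mk a).carrier = Nat.card K := by
  rw [ConjClasses.mulAut_smul_mk, ConjClasses.mk_eq_mk_iff_isConj, isConj_iff] at h
  obtain ⟨c, hc⟩ := h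
  rw [Nat.card_congr (fixedByEquivStabilizer ψ (mul_inv_eq_iff_eq_mul.mp hc).symm),
    ← ConjAct.orbit_eq_carrier_conjClasses, Nat.card_congr (orbitEquivQuotientStabilizer _ a),
    ← Subgroup.index, Subgroup.card_mul_index]
  rfl

theorem card_fixedBy_eq_zero {a : K} (h : ψ • ConjClasses.mk a ≠ ConjClasses.mk a) :
    Nat.card (fixedBy (TwistedConjAct ψ) a) = 0 := by
  suffices IsEmpty (fixedBy (TwistedConjAct ψ) a) from Nat.card_of_isEmpty
  refine ⟨fun ⟨x, hx⟩ => h ?_⟩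
  obtain ⟨y, rfl⟩ := (ofGroup ψ).surjective x
  rw [ofGroup_mem_fixedBy_iff] at hx
  rw [ConjClasses.mulAut_smul_mk, ConjClasses.mk_eq_mk_iff_isConj, isConj_iff]
  exact ⟨y, by rw [← hx, mul_inv_cancel_right]⟩

open Finset in
theorem sum_card_fixedBy_of_mk_eq [Fintype K] [DecidableEq (ConjClasses K)] (C : ConjClasses K) :
    ∑ a with ConjClasses.mk a = C, Nat.card (fixedBy (TwistedConjAct ψ) a) =
      if ψ • C = C then Nat.card K else 0 := by
  split_ifs with h
  · have hcarrier : Nat.card C.carrier = #{a | ConjClasses.mk a = C} := by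
      rw [← Fintype.card_subtype, ← Nat.card_eq_fintype_card]
      exact Nat.card_congr (Equiv.subtypeEquivRight fun a => ConjClasses.mem_carrier_iff_mk_eq)
    have hterm : ∀ a ∈ ({a | ConjClasses.mk a = C} : Finset K),
        Nat.card (fixedBy (TwistedConjAct ψ) a) * #{a | ConjClasses.mk a = C} = Nat.card K := by
      intro a ha
      rw [← hcarrier, ← (mem_filter.mp ha).2]
      exact card_fixedBy_mul_card_carrier (by rwa [(mem_filter.mp ha).2])
    obtain ⟨a₀, ha₀⟩ := ConjClasses.exists_rep C
    have hpos : 0 < #{a | ConjClasses.mk a = C} := card_pos.mpr ⟨a₀, by simpa using ha₀⟩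
    apply Nat.eq_of_mul_eq_mul_right hpos
    rw [sum_mul, sum_congr rfl hterm, sum_const, smul_eq_mul, mul_comm]
  · exact sum_eq_zero fun a ha => card_fixedBy_eq_zero (by rwa [(mem_filter.mp ha).2])

end TwistedConjAct

open Finset in
theorem reidemeisterNumber_eq_card_fixedBy [Finite K] (ψ : MulAut K) :
    ReidemeisterNumber K ψ = Nat.card (fixedBy (ConjClasses K) ψ) := by
  classical
  have := Fintype.ofFinite K
  have := Fintype.ofFinite (ConjClasses K)
  have : Fintype (TwistedConjAct ψ) := inferInstanceAs (Fintype K)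
  have burnside := sum_card_fixedBy_eq_card_orbits_mul_card_group K (TwistedConjAct ψ)
  simp only [Fintype.card_eq_nat_card, TwistedConjAct.card_orbits_eq_reidemeisterNumber]
    at burnside
  rw [← sum_fiberwise univ ConjClasses.mk,
    sum_congr rfl fun C _ => TwistedConjAct.sum_card_fixedBy_of_mk_eq C,
    sum_ite, sum_const, sum_const_zero, add_zero, smul_eq_mul] at burnside
  refine (Nat.eq_of_mul_eq_mul_right Nat.card_pos burnside).symm.trans ?_
  rw [← Fintype.card_subtype, Fintype.card_eq_nat_card]
  rfl

end TwistedBurnside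

theorem MulAut.coe_pow {G : Type*} [Group G] (α : MulAut G) (m : ℕ) : ⇑(α ^ m) = (⇑α)^[m] := by
  induction m with
  | zero => rfl
  | succ m ih => rw [pow_succ', MulAut.coe_mul, ih, iterate_succ']

section Intertwining

variable {G H : Type*} [Group G] [Group H] {α : MulAut G} {β : MulAut H} {f : G →* H}

theorem TwistedConj.map (hf : Semiconj f α β) {x y : G} (h : TwistedConj α x y) :
    TwistedConj β (f x) (f y) := by
  obtain ⟨g, rfl⟩ := h
  exact ⟨f g, by rw [map_mul, map_mul, map_inv, hf.eq]⟩

theorem Function.Semiconj.mulAut_pow (hf : Semiconj f α β) (m : ℕ) :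
    Semiconj f ⇑(α ^ m) ⇑(β ^ m) := by
  rw [MulAut.coe_pow, MulAut.coe_pow]
  exact hf.iterate_right m

theorem reidemeisterNumber_eq_of_surjective (hf : Semiconj f α β) (hsurj : Surjective f)
    (hreflect : ∀ x y, TwistedConj β (f x) (f y) → TwistedConj α x y) :
    ReidemeisterNumber G α = ReidemeisterNumber H β := by
  refine Nat.card_eq_of_bijective (Quotient.map f fun x y => TwistedConj.map hf) ⟨?_, ?_⟩
  · rintro ⟨x⟩ ⟨y⟩ hxy
    exact Quotient.sound (hreflect x y (Quotient.exact hxy))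
  · rintro ⟨z⟩
    obtain ⟨x, rfl⟩ := hsurj z
    exact ⟨⟦x⟧, rfl⟩

end Intertwining

section Separation

variable {G : Type*} [Group G]

/-- For `H` normal and `α`-invariant: `x` and `y` have `α`-twisted conjugate images in `G ⧸ H`. -/
def TwistedConjMod (α : MulAut G) (H : Subgroup G) (x y : G) : Prop :=
  ∃ g : G, y⁻¹ * (g * x * (α g)⁻¹) ∈ H

variable {α : MulAut G} {H N : Subgroup G} {x y : G}

theorem TwistedConjMod.mono (hle : N ≤ H) (h : TwistedConjMod α N x y) :
    TwistedConjMod α H x y :=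
  h.imp fun _ hg => hle hg

theorem TwistedConjMod.of_twistedConj [H.Normal] (h : TwistedConjMod α H x y) {x' y' : G}
    (hx : TwistedConj α x x') (hy : TwistedConj α y y') : TwistedConjMod α H x' y' := by
  obtain ⟨g, hg⟩ := h
  obtain ⟨a, rfl⟩ := hx
  obtain ⟨b, rfl⟩ := hy
  refine ⟨b * g * a⁻¹, ?_⟩
  convert ‹H.Normal›.conj_mem _ hg (α b) using 1
  simp only [map_mul, map_inv]
  group

theorem TwistedConj.of_twistedConjMod_ker {K : Type*} [Group K] {β : MulAut K} {F : G →* K}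
    (hF : Semiconj F α β) (h : TwistedConjMod α F.ker x y) : TwistedConj β (F x) (F y) := by
  obtain ⟨g, hg⟩ := h
  refine ⟨F g, ?_⟩
  rw [MonoidHom.mem_ker, map_mul, map_inv, inv_mul_eq_one] at hg
  rw [hg, map_mul, map_mul, map_inv, hF.eq]

theorem twistedConjMod_of_twistedConj_mk [N.Normal] {β : MulAut (G ⧸ N)}
    (hβ : Semiconj (QuotientGroup.mk' N) α β) (h : TwistedConj β (x : G ⧸ N) y) :
    TwistedConjMod α N x y := by
  obtain ⟨c, hc⟩ := h
  obtain ⟨g, rfl⟩ := QuotientGroup.mk'_surjective N c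
  refine ⟨g, QuotientGroup.eq.mp ?_⟩
  rw [← hβ.eq] at hc
  simpa using hc

theorem SepWitness.exists_subgroup (h : SepWitness α x y) :
    ∃ H : Subgroup G, H.Normal ∧ H.FiniteIndex ∧ (∀ g, α g ∈ H ↔ g ∈ H) ∧
      ¬ TwistedConjMod α H x y := by
  obtain ⟨K, φK, F, -, hF, hsep⟩ := h
  refine ⟨F.ker, inferInstance, inferInstance, fun g => ?_, fun hxy => hsep ?_⟩
  · rw [MonoidHom.mem_ker, MonoidHom.mem_ker, hF, map_eq_one_iff _ φK.injective]
  · exact TwistedConj.of_twistedConjMod_ker hF hxy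

theorem exists_subgroup_reflects_twistedConj [Finite (Quotient (twSetoid G α))]
    (hsep : PhiConjSep α) :
    ∃ H : Subgroup G, H.Normal ∧ H.FiniteIndex ∧ (∀ g, α g ∈ H ↔ g ∈ H) ∧
      ∀ x y, TwistedConjMod α H x y → TwistedConj α x y := by
  have hpair : ∀ p : Quotient (twSetoid G α) × Quotient (twSetoid G α), ∃ H : Subgroup G,
      H.Normal ∧ H.FiniteIndex ∧ (∀ g, α g ∈ H ↔ g ∈ H) ∧
        (TwistedConjMod α H p.1.out p.2.out → p.1 = p.2) := by
    rintro ⟨a, b⟩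
    by_cases hab : a = b
    · exact ⟨⊤, inferInstance, inferInstance, by simp, fun _ => hab⟩
    · have hne : ¬ TwistedConj α a.out b.out := fun h =>
        hab (by rw [← a.out_eq, ← b.out_eq]; exact Quotient.sound h)
      obtain ⟨H, hN, hFI, hinv, hH⟩ := (hsep _ _ hne).exists_subgroup
      exact ⟨H, hN, hFI, hinv, fun h => absurd h hH⟩
  choose H hN hFI hinv hH using hpair
  refine ⟨⨅ p, H p, Subgroup.normal_iInf_normal hN, Subgroup.finiteIndex_iInf hFI,
    fun g => by simp only [Subgroup.mem_iInf, hinv], fun x y hxy => ?_⟩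
  have hrep : ∀ z, TwistedConj α z (Quotient.mk (twSetoid G α) z).out := fun z =>
    (twSetoid G α).symm (Quotient.exact (Quotient.out_eq _))
  exact Quotient.exact <| hH (Quotient.mk _ x, Quotient.mk _ y)
    ((hxy.mono (iInf_le H _)).of_twistedConj (hrep x) (hrep y))

end Separation

section InvariantSubgroup

variable {G : Type*} [Group G]

theorem MulAut.pow_apply_mem_iff {α : MulAut G} {H : Subgroup G} (h : ∀ g, α g ∈ H ↔ g ∈ H)
    (k : ℕ) (g : G) : (α ^ k) g ∈ H ↔ g ∈ H := by
  induction k generalizing g with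
  | zero => rfl
  | succ k ih => rw [pow_succ, MulAut.mul_apply, ih, h]

theorem Subgroup.exists_le_map_eq (φ : MulAut G) (H : Subgroup G) [H.Normal] [H.FiniteIndex]
    {n : ℕ} (hn : n ≠ 0) (hH : ∀ g, (φ ^ n) g ∈ H ↔ g ∈ H) :
    ∃ N ≤ H, N.Normal ∧ N.FiniteIndex ∧ N.map φ.toMonoidHom = N := by
  set N := ⨅ j ∈ Finset.range n, H.comap (φ ^ j).toMonoidHom
  have hmem : ∀ g, g ∈ N ↔ ∀ j < n, (φ ^ j) g ∈ H := by
    simp [N, Subgroup.mem_iInf]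
  have hinv : ∀ g, φ g ∈ N ↔ g ∈ N := by
    intro g
    simp only [hmem, ← MulAut.mul_apply, ← pow_succ]
    constructor
    · rintro h (_ | j) hj
      · rw [pow_zero, MulAut.one_apply, ← hH, ← Nat.sub_add_cancel (Nat.one_le_iff_ne_zero.mpr hn)]
        exact h (n - 1) (by omega)
      · exact h j (by omega)
    · intro h j hj
      rcases (by omega : j + 1 < n ∨ j + 1 = n) with hj' | hj'
      · exact h _ hj'
      · simpa [hj', hH] using h 0 (by omega)
  refine ⟨N, fun g hg => by simpa using (hmem g).mp hg 0 (by omega), ?_, ?_, ?_⟩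
  · exact Subgroup.normal_iInf_normal fun j => Subgroup.normal_iInf_normal fun _ => inferInstance
  · refine Subgroup.finiteIndex_iInf' _ fun j _ => ⟨?_⟩
    rw [Subgroup.index_comap_of_surjective _ (φ ^ j).surjective]
    exact Subgroup.FiniteIndex.index_ne_zero
  · ext x
    rw [Subgroup.mem_map_equiv, ← hinv, MulEquiv.apply_symm_apply]

end InvariantSubgroup

universe u

theorem exists_finite_quotient_reidemeisterNumber_eq {G : Type u} [Group G] (φ : MulAut G)
    (hsep : TwistedConjSep G) (hfin : ∀ n : ℕ, 0 < n → Finite (Quotient (twSetoid G (φ ^ n))))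
    {n : ℕ} (hn : 0 < n) :
    ∃ (K : Type u) (_ : Group K) (_ : Finite K) (ψ : MulAut K),
      ∀ m ∈ n.divisors, ReidemeisterNumber G (φ ^ m) = ReidemeisterNumber K (ψ ^ m) := by
  have hdiv : ∀ m : n.divisors, ∃ H : Subgroup G, H.Normal ∧ H.FiniteIndex ∧
      (∀ g, (φ ^ n) g ∈ H ↔ g ∈ H) ∧
        ∀ x y, TwistedConjMod (φ ^ (m : ℕ)) H x y → TwistedConj (φ ^ (m : ℕ)) x y := by
    rintro ⟨m, hm⟩
    have := hfin m (Nat.pos_of_mem_divisors hm)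
    obtain ⟨H, hN, hFI, hinv, hH⟩ := exists_subgroup_reflects_twistedConj (hsep _ this)
    obtain ⟨k, hk⟩ := Nat.dvd_of_mem_divisors hm
    exact ⟨H, hN, hFI, by rw [hk, pow_mul]; exact MulAut.pow_apply_mem_iff hinv k, hH⟩
  choose H hN hFI hinv hH using hdiv
  have := Subgroup.normal_iInf_normal hN
  have := Subgroup.finiteIndex_iInf hFI
  obtain ⟨N, hle, hNn, hNFI, hmap⟩ := Subgroup.exists_le_map_eq φ (⨅ m, H m) hn.ne'
    fun g => by simp only [Subgroup.mem_iInf, hinv]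
  have hπ : Semiconj (QuotientGroup.mk' N) φ (QuotientGroup.congr N N φ hmap) := fun g =>
    (QuotientGroup.congr_mk N N φ hmap g).symm
  refine ⟨G ⧸ N, inferInstance, inferInstance, QuotientGroup.congr N N φ hmap, fun m hm => ?_⟩
  refine reidemeisterNumber_eq_of_surjective (hπ.mulAut_pow m) (QuotientGroup.mk'_surjective N)
    fun x y hxy => hH ⟨m, hm⟩ x y ?_
  exact (twistedConjMod_of_twistedConj_mk (hπ.mulAut_pow m) hxy).mono (hle.trans (iInf_le _ _))

theorem reidemeister_congruences_general
    {G : Type*} [Group G] (φ : MulAut G)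
    (hsep : TwistedConjSep G)
    (hfin : ∀ n : ℕ, 0 < n → Finite (Quotient (twSetoid G (φ ^ n)))) :
    ∀ n : ℕ, 0 < n →
      (n : ℤ) ∣ ∑ d ∈ n.divisors,
        ArithmeticFunction.moebius d * (ReidemeisterNumber G (φ ^ (n / d)) : ℤ) := by
  intro n hn
  obtain ⟨K, _, _, ψ, hK⟩ := exists_finite_quotient_reidemeisterNumber_eq φ hsep hfin hn
  set σ := MulAction.toPermHom (MulAut K) (ConjClasses K) ψ
  have hfix : ∀ d ∈ n.divisors,
      ReidemeisterNumber G (φ ^ (n / d)) = Nat.card {C // (σ ^ (n / d)) C = C} := fun d hd => by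
    rw [hK _ (Nat.mem_divisors.mpr ⟨Nat.div_dvd_of_dvd (Nat.dvd_of_mem_divisors hd), hn.ne'⟩),
      reidemeisterNumber_eq_card_fixedBy, ← map_pow]
    rfl
  rw [Finset.sum_congr rfl fun d hd => by rw [hfix d hd]]
  exact σ.dvd_sum_moebius_mul_card_fixedPoints_pow hn

/-- Congruences for Reidemeister numbers: if `φ` is an automorphism of a countable
discrete twisted conjugacy separable group `G` such that all numbers `R(φⁿ)` are
finite, then for all `n ≥ 1` one has `∑_{d ∣ n} μ(d) · R(φ^{n/d}) ≡ 0 (mod n)`. -/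
theorem reidemeister_congruences
    {G : Type*} [Group G] [Countable G] (φ : MulAut G)
    (hsep : TwistedConjSep G)
    (hfin : ∀ n : ℕ, 0 < n → Finite (Quotient (twSetoid G (φ ^ n)))) :
    ∀ n : ℕ, 0 < n →
      (n : ℤ) ∣ ∑ d ∈ n.divisors,
        ArithmeticFunction.moebius d * (ReidemeisterNumber G (φ ^ (n / d)) : ℤ) :=
  reidemeister_congruences_general φ hsep hfin
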